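/- arXiv:2105.10739 — 5 statements merged into one kernel-verified Lean document; each statement's English description precedes it below -/
import Mathlib

section
/- If D is a decycling set of a graph G = (V,E) with maximum degree Δ ≥ 2, then |D| ≥ ⌈(|E| - |V| + 1)/(Δ - 1)⌉. -/
open SimpleGraph Finset

lemma my_acyclic_anti {V : Type*} {G G' : SimpleGraph V} (h : G' ≤ G) (hG : G.IsAcyclic) :
    G'.IsAcyclic := fun _ c hc => hG (c.mapLe h) (hc.mapLe h)

lemma my_forest_aux {V : Type*} [Fintype V] :
    ∀ (n : ℕ) (G : SimpleGraph V), Nat.card G.edgeSet = n → G.IsAcyclic →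
      n + Nat.card G.ConnectedComponent ≤ Fintype.card V := by
  intro n
  induction n using Nat.strong_induction_on with
  | _ n ih =>
    intro G hn hG
    rcases Nat.eq_zero_or_pos n with h0 | hpos
    · subst h0
      have : Nat.card G.ConnectedComponent ≤ Nat.card V :=
        Nat.card_le_card_of_surjective _ (Quot.mk_surjective)
      simpa [Nat.card_eq_fintype_card] using this
    · have hne : Nonempty G.edgeSet := by
        exact (Nat.card_pos_iff.mp (hn ▸ hpos)).1
      obtain ⟨e, he⟩ := hne
      induction e using Sym2.ind with
      | _ u v =>
      have hadj : G.Adj u v := he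
      set G' : SimpleGraph V := G \ fromEdgeSet {s(u, v)} with hG'def
      have hle : G' ≤ G := sdiff_le
      have hG'ac : G'.IsAcyclic := my_acyclic_anti hle hG
      have hedges : (G'.edgeSet) = G.edgeSet \ {s(u, v)} := by
        rw [hG'def, ← SimpleGraph.deleteEdges]
        exact SimpleGraph.edgeSet_deleteEdges _
      have hcard' : Nat.card G'.edgeSet = n - 1 := by
        rw [Nat.card_coe_set_eq, hedges, Set.ncard_diff_singleton_of_mem he,
          ← Nat.card_coe_set_eq, hn]
      have hbridge : G.IsBridge s(u, v) :=
        (isAcyclic_iff_forall_edge_isBridge.mp hG) he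
      have hnr : ¬ G'.Reachable u v := hbridge
      let φ : G' →g G := SimpleGraph.Hom.ofLE hle
      have hsurj : Function.Surjective (ConnectedComponent.map φ) := by
        intro c
        refine ConnectedComponent.ind (fun w => ⟨G'.connectedComponentMk w, rfl⟩) c
      have hninj : ¬ Function.Injective (ConnectedComponent.map φ) := by
        intro hinj
        apply hnr
        have : ConnectedComponent.map φ (G'.connectedComponentMk u)
            = ConnectedComponent.map φ (G'.connectedComponentMk v) := by
          simp only [ConnectedComponent.map_mk]
          exact ConnectedComponent.sound hadj.reachable
        exact ConnectedComponent.exact (hinj this)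
      have hlt : Nat.card G.ConnectedComponent < Nat.card G'.ConnectedComponent := by
        rcases lt_or_eq_of_le (Nat.card_le_card_of_surjective _ hsurj) with h | h
        · exact h
        · exfalso
          apply hninj
          haveI : Fintype G'.ConnectedComponent := Fintype.ofFinite _
          haveI : Fintype G.ConnectedComponent := Fintype.ofFinite _
          rw [Nat.card_eq_fintype_card, Nat.card_eq_fintype_card] at h
          exact ((Fintype.bijective_iff_surjective_and_card _).mpr ⟨hsurj, h.symm⟩).1
      have := ih (n - 1) (by omega) G' hcard' hG'ac
      omega

lemma my_forest_bound {V : Type*} [Fintype V] [Nonempty V] (G : SimpleGraph V)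
    [Fintype G.edgeSet] (hG : G.IsAcyclic) :
    G.edgeFinset.card + 1 ≤ Fintype.card V := by
  haveI : Nonempty G.ConnectedComponent := ⟨G.connectedComponentMk (Classical.arbitrary V)⟩
  have h1 : 0 < Nat.card G.ConnectedComponent := Nat.card_pos
  have h := my_forest_aux (Nat.card G.edgeSet) G rfl hG
  have h2 : G.edgeFinset.card = Nat.card G.edgeSet := by
    rw [Nat.card_eq_fintype_card, SimpleGraph.edgeFinset_card]
  omega

/-- If `D` is a decycling set of a finite graph `G` with maximum degree `Δ ≥ 2`,
then `|D| ≥ ⌈(|E| - |V| + 1)/(Δ - 1)⌉`. -/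
theorem decycling_lower_bound {V : Type*} [Fintype V] [DecidableEq V]
    (G : SimpleGraph V) [DecidableRel G.Adj] (D : Finset V)
    (hΔ : 2 ≤ G.maxDegree)
    (hD : (G.induce ((↑D : Set V)ᶜ)).IsAcyclic) :
    ⌈((G.edgeFinset.card : ℚ) - Fintype.card V + 1) / ((G.maxDegree : ℚ) - 1)⌉ ≤ (D.card : ℤ) := by
  classical
  set Δ := G.maxDegree with hΔdef
  set n := Fintype.card V with hndef
  set E := G.edgeFinset.card with hEdef
  set k := D.card with hkdef
  haveI : Nonempty V := by
    by_contra h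
    rw [not_nonempty_iff] at h
    have : G.maxDegree = 0 := by
      simp only [SimpleGraph.maxDegree, Finset.univ_eq_empty, Finset.image_empty]
      rfl
    omega
  have hn1 : 1 ≤ n := Fintype.card_pos
  -- Split the edges into those meeting `D` and those avoiding `D`.
  set A := G.edgeFinset.filter (fun e => ∃ v ∈ D, v ∈ e) with hA
  set C := G.edgeFinset.filter (fun e => ¬ ∃ v ∈ D, v ∈ e) with hC
  have hsplit : A.card + C.card = E := Finset.card_filter_add_card_filter_not _
  have hAcard : A.card ≤ k * Δ := by
    have hsub : A ⊆ D.biUnion (fun v => G.incidenceFinset v) := by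
      intro e he
      rw [hA, Finset.mem_filter] at he
      obtain ⟨he1, v, hv, hve⟩ := he
      rw [Finset.mem_biUnion]
      exact ⟨v, hv, by
        rw [SimpleGraph.mem_incidenceFinset]
        exact ⟨SimpleGraph.mem_edgeFinset.mp he1, hve⟩⟩
    calc A.card ≤ (D.biUnion (fun v => G.incidenceFinset v)).card := Finset.card_le_card hsub
      _ ≤ ∑ v ∈ D, (G.incidenceFinset v).card := Finset.card_biUnion_le
      _ ≤ ∑ _v ∈ D, Δ := Finset.sum_le_sum (fun v _ => by
          rw [SimpleGraph.card_incidenceFinset_eq_degree]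
          exact G.degree_le_maxDegree v)
      _ = k * Δ := by rw [Finset.sum_const, smul_eq_mul]
  have hCcard : C.card ≤ (G.induce ((↑D : Set V)ᶜ)).edgeFinset.card := by
    have hCsub : C ⊆ (G.induce ((↑D : Set V)ᶜ)).edgeFinset.image (Sym2.map Subtype.val) := by
      intro e he
      rw [hC, Finset.mem_filter] at he
      obtain ⟨he1, he2⟩ := he
      push_neg at he2
      revert he1 he2
      induction e using Sym2.ind with
      | _ a b =>
        intro he1 he2
        have hab : G.Adj a b := SimpleGraph.mem_edgeFinset.mp he1
        have ha : a ∈ ((↑D : Set V)ᶜ) := fun haD => he2 a haD (by simp)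
        have hb : b ∈ ((↑D : Set V)ᶜ) := fun hbD => he2 b hbD (by simp)
        refine Finset.mem_image.mpr ⟨s(⟨a, ha⟩, ⟨b, hb⟩), ?_, by simp⟩
        rw [SimpleGraph.mem_edgeFinset, SimpleGraph.mem_edgeSet]
        exact hab
    calc C.card ≤ _ := Finset.card_le_card hCsub
      _ ≤ _ := Finset.card_image_le
  have hkey : E + k + 1 ≤ k * Δ + n := by
    by_cases hcompl : ((↑D : Set V)ᶜ).Nonempty
    · haveI := hcompl.to_subtype
      have hforest := my_forest_bound _ hD
      have hcc : Fintype.card ((↑D : Set V)ᶜ : Set V) = n - k := by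
        rw [Fintype.card_compl_set]
        simp [hndef, hkdef]
      have hkn : k ≤ n := by
        rw [hkdef, hndef]; exact Finset.card_le_univ D
      rw [hcc] at hforest
      have hkn' : k < n := by
        by_contra hk
        omega
      omega
    · -- D = univ, use the handshake lemma
      rw [Set.not_nonempty_iff_eq_empty, Set.compl_empty_iff] at hcompl
      have hkeq : k = n := by
        rw [hkdef, hndef, ← Finset.card_univ]
        congr 1
        exact_mod_cast Finset.coe_injective (by rw [hcompl, Finset.coe_univ])
      have hsum : 2 * E = ∑ v, G.degree v := (G.sum_degrees_eq_twice_card_edges).symm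
      have hsum2 : ∑ v, G.degree v ≤ n * Δ := by
        calc ∑ v, G.degree v ≤ ∑ _v : V, Δ :=
              Finset.sum_le_sum (fun v _ => G.degree_le_maxDegree v)
          _ = n * Δ := by rw [Finset.sum_const, smul_eq_mul, Finset.card_univ]
      have hke : k * Δ = n * Δ := by rw [hkeq]
      have hnd : 2 ≤ n * Δ := le_trans (by omega) (Nat.mul_le_mul hn1 (le_refl Δ))
      set m := n * Δ with hm
      clear_value m
      omega
  -- Conclude with rational arithmetic.
  rw [Int.ceil_le]
  have hΔ1 : (0 : ℚ) < (Δ : ℚ) - 1 := by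
    have : (2 : ℚ) ≤ (Δ : ℚ) := by exact_mod_cast hΔ
    linarith
  rw [div_le_iff₀ hΔ1]
  have hkeyQ : (E : ℚ) + k + 1 ≤ k * Δ + n := by exact_mod_cast hkey
  push_cast
  nlinarith [hkeyQ]
end

section
/- The decycling number of BS_4 is 10. -/
def BS (n : ℕ) : SimpleGraph (Equiv.Perm (Fin n)) :=
  SimpleGraph.fromRel (fun u v => ∃ i j : Fin n, i < j ∧
    ((i : ℕ) = 0 ∨ (j : ℕ) = (i : ℕ) + 1) ∧ v = u * Equiv.swap i j)


/-- The decycling number (feedback vertex number) of a finite graph: the minimum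
size of a vertex set whose removal leaves an acyclic graph. -/
noncomputable def decyclingNumber {V : Type*} [Fintype V] (G : SimpleGraph V) : ℕ :=
  sInf {k | ∃ D : Finset V, D.card = k ∧ (G.induce ((↑D : Set V)ᶜ)).IsAcyclic}

open SimpleGraph Finset

/-! ### Auxiliary lemmas -/

/-- If a graph has a rank function such that adjacent vertices have distinct ranks and every
vertex has at most one neighbour of smaller rank, then the graph is acyclic. -/
lemma acyclic_of_rank {W : Type*} (H : SimpleGraph W) (f : W → ℕ)
    (hne : ∀ u v, H.Adj u v → f u ≠ f v)
    (hsub : ∀ v w₁ w₂, H.Adj v w₁ → H.Adj v w₂ → f w₁ < f v → f w₂ < f v → w₁ = w₂) :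
    H.IsAcyclic := by
  classical
  intro x c hc
  obtain ⟨m, hmmem, hmax⟩ := Finset.exists_max_image c.support.toFinset f
      ⟨x, List.mem_toFinset.2 c.start_mem_support⟩
  rw [List.mem_toFinset] at hmmem
  have hmax' : ∀ y ∈ c.support, f y ≤ f m := fun y hy => hmax y (List.mem_toFinset.2 hy)
  have key : ∀ (c' : H.Walk m m), c'.IsCycle → (∀ y ∈ c'.support, f y ≤ f m) → False := by
    intro c' hc' hsup
    have h3 := hc'.three_le_length
    cases c' with
    | nil => simp at h3
    | @cons _ b _ h p =>
      cases hpr : p.reverse with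
      | nil =>
        have hp0 : p.length = 0 := by
          have := congrArg SimpleGraph.Walk.length hpr
          simpa using this
        simp [SimpleGraph.Walk.length_cons, hp0] at h3
      | @cons _ u _ h2 q =>
        -- h2 : H.Adj m u, last edge of p is s(u, m)
        have hedge : s(m, u) ∈ p.edges := by
          have := congrArg SimpleGraph.Walk.edges hpr
          rw [SimpleGraph.Walk.edges_reverse, SimpleGraph.Walk.edges_cons] at this
          have : s(m, u) ∈ p.edges.reverse := this ▸ List.mem_cons_self
          simpa using this
        have hbu : b ≠ u := by
          intro hbu
          subst hbu
          have hnodup := hc'.isTrail.edges_nodup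
          rw [SimpleGraph.Walk.edges_cons] at hnodup
          exact (List.nodup_cons.1 hnodup).1 hedge
        have hfb : f b < f m := by
          have hble : f b ≤ f m := hsup b (by
            rw [SimpleGraph.Walk.support_cons]
            exact List.mem_cons_of_mem _ p.start_mem_support)
          exact lt_of_le_of_ne hble (Ne.symm (hne m b h))
        have hfu : f u < f m := by
          have humem : u ∈ p.support := by
            have : u ∈ p.reverse.support := by
              rw [hpr, SimpleGraph.Walk.support_cons]
              exact List.mem_cons_of_mem _ q.start_mem_support
            simpa using this
          have hule : f u ≤ f m := hsup u (by
            rw [SimpleGraph.Walk.support_cons]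
            exact List.mem_cons_of_mem _ humem)
          exact lt_of_le_of_ne hule (Ne.symm (hne m u h2))
        exact hbu (hsub m b u h h2 hfb hfu)
  refine key (c.rotate m hmmem) (hc.rotate hmmem) ?_
  intro y hy
  rw [SimpleGraph.Walk.support_eq_cons] at hy
  rcases List.mem_cons.1 hy with rfl | hy
  · exact le_rfl
  · have : y ∈ c.support.tail := (SimpleGraph.Walk.support_rotate c m hmmem).mem_iff.1 hy
    exact hmax' y (List.mem_of_mem_tail this)

lemma isAcyclic_mono {W : Type*} {G H : SimpleGraph W} (hle : H ≤ G) (hG : G.IsAcyclic) :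
    H.IsAcyclic := fun _ c hc => hG (c.mapLe hle) (hc.mapLe hle)

/-- Adding an edge between two vertices that are not reachable from each other preserves
acyclicity. -/
lemma acyclic_sup_edge {W : Type*} {G : SimpleGraph W} {u v : W} (hne : u ≠ v)
    (hnr : ¬ G.Reachable u v) (hG : G.IsAcyclic) :
    (G ⊔ SimpleGraph.fromEdgeSet {s(u, v)}).IsAcyclic := by
  classical
  set G' := G ⊔ SimpleGraph.fromEdgeSet {s(u, v)} with hG'
  intro x p hp
  by_cases he : s(u, v) ∈ p.edges
  · have hfact := SimpleGraph.adj_and_reachable_delete_edges_iff_exists_cycle.2 ⟨x, p, hp, he⟩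
    have hle : G' \ SimpleGraph.fromEdgeSet {s(u, v)} ≤ G := by
      intro a b hab
      rw [SimpleGraph.sdiff_adj] at hab
      obtain ⟨hab1, hab2⟩ := hab
      rw [hG', SimpleGraph.sup_adj] at hab1
      rcases hab1 with h | h
      · exact h
      · exact absurd h hab2
    exact hnr ((hfact.2).mono hle)
  · have hsub : ∀ e ∈ p.edges, e ∈ G.edgeSet := by
      intro e hmem
      have := p.edges_subset_edgeSet hmem
      rw [hG', SimpleGraph.edgeSet_sup, SimpleGraph.edgeSet_fromEdgeSet] at this
      rcases this with h | h
      · exact h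
      · exfalso
        have : e = s(u, v) := h.1
        exact he (this ▸ hmem)
    exact hG (p.transfer G hsub) (hp.transfer hsub)

/-- A finite acyclic graph on a nonempty vertex set has at most `|V| - 1` edges. -/
lemma card_edgeFinset_le_of_isAcyclic {W : Type*} [Fintype W] [Nonempty W]
    (G : SimpleGraph W) [Fintype G.edgeSet] (hG : G.IsAcyclic) :
    G.edgeFinset.card + 1 ≤ Fintype.card W := by
  classical
  have hfin : ({T : SimpleGraph W | G ≤ T ∧ T.IsAcyclic}).Finite := Set.toFinite _
  obtain ⟨T, hTmem, hTmax⟩ : ∃ T ∈ {T : SimpleGraph W | G ≤ T ∧ T.IsAcyclic},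
      ∀ T' ∈ {T : SimpleGraph W | G ≤ T ∧ T.IsAcyclic}, id T ≤ id T' → id T = id T' := by
    obtain ⟨T, hT⟩ := Set.Finite.exists_maximal hfin ⟨G, le_rfl, hG⟩
    exact ⟨T, hT.1, fun T' h1 h2 => le_antisymm h2 (hT.2 h1 h2)⟩
  obtain ⟨hGT, hTac⟩ := hTmem
  have hTconn : T.Connected := by
    rw [SimpleGraph.connected_iff]
    refine ⟨?_, inferInstance⟩
    intro a b
    by_contra hnr
    have hab : a ≠ b := by rintro rfl; exact hnr (SimpleGraph.Reachable.refl a)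
    have hT' : (T ⊔ SimpleGraph.fromEdgeSet {s(a, b)}).IsAcyclic :=
      acyclic_sup_edge hab hnr hTac
    have heq : T = T ⊔ SimpleGraph.fromEdgeSet {s(a, b)} :=
      hTmax _ ⟨le_trans hGT le_sup_left, hT'⟩ le_sup_left
    have : T.Adj a b := by
      rw [heq, SimpleGraph.sup_adj]
      right
      rw [SimpleGraph.fromEdgeSet_adj]
      exact ⟨Set.mem_singleton _, hab⟩
    exact hnr this.reachable
  have hTree : T.IsTree := ⟨hTconn, hTac⟩
  letI : Fintype T.edgeSet := Fintype.ofFinite _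
  have hTcard := hTree.card_edgeFinset
  have hsub : G.edgeFinset ⊆ T.edgeFinset := SimpleGraph.edgeFinset_mono hGT
  have := Finset.card_le_card hsub
  omega

instance : DecidableRel (BS 4).Adj := fun u v =>
  decidable_of_iff _ (SimpleGraph.fromRel_adj _ u v).symm

/-- An explicit decycling set of `BS 4` of size 10. -/
def D10 : Finset (Equiv.Perm (Fin 4)) :=
  {(1),
  (Equiv.swap (2:Fin 4) 3),
  (Equiv.swap (1:Fin 4) 2),
  (Equiv.swap (0:Fin 4) 1 * Equiv.swap (1:Fin 4) 2 * Equiv.swap (2:Fin 4) 3),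
  (Equiv.swap (0:Fin 4) 1 * Equiv.swap (1:Fin 4) 3 * Equiv.swap (3:Fin 4) 2),
  (Equiv.swap (0:Fin 4) 2 * Equiv.swap (2:Fin 4) 3 * Equiv.swap (3:Fin 4) 1),
  (Equiv.swap (0:Fin 4) 2),
  (Equiv.swap (0:Fin 4) 2 * Equiv.swap (2:Fin 4) 1 * Equiv.swap (1:Fin 4) 3),
  (Equiv.swap (0:Fin 4) 3 * Equiv.swap (3:Fin 4) 2 * Equiv.swap (2:Fin 4) 1),
  (Equiv.swap (0:Fin 4) 3 * Equiv.swap (3:Fin 4) 1 * Equiv.swap (1:Fin 4) 2)}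

/-- A BFS ordering of the forest `BS 4 - D10`, used as a rank function. -/
def forestOrder : List (Equiv.Perm (Fin 4)) :=
  [(Equiv.swap (1:Fin 4) 2 * Equiv.swap (2:Fin 4) 3),
  (Equiv.swap (1:Fin 4) 3),
  (Equiv.swap (0:Fin 4) 3 * Equiv.swap (3:Fin 4) 1),
  (Equiv.swap (0:Fin 4) 2 * Equiv.swap (1:Fin 4) 3),
  (Equiv.swap (1:Fin 4) 3 * Equiv.swap (3:Fin 4) 2),
  (Equiv.swap (0:Fin 4) 1 * Equiv.swap (1:Fin 4) 3),
  (Equiv.swap (0:Fin 4) 1),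
  (Equiv.swap (0:Fin 4) 3),
  (Equiv.swap (0:Fin 4) 1 * Equiv.swap (2:Fin 4) 3),
  (Equiv.swap (0:Fin 4) 1 * Equiv.swap (1:Fin 4) 2),
  (Equiv.swap (0:Fin 4) 2 * Equiv.swap (2:Fin 4) 1),
  (Equiv.swap (0:Fin 4) 3 * Equiv.swap (1:Fin 4) 2),
  (Equiv.swap (0:Fin 4) 3 * Equiv.swap (3:Fin 4) 2),
  (Equiv.swap (0:Fin 4) 2 * Equiv.swap (2:Fin 4) 3)]

def rk (v : Equiv.Perm (Fin 4)) : ℕ := forestOrder.idxOf v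

lemma D10_card : D10.card = 10 := by decide

lemma rk_ne : ∀ v w : Equiv.Perm (Fin 4), v ∉ D10 → w ∉ D10 → (BS 4).Adj v w →
    rk v ≠ rk w := by decide

lemma rk_sub : ∀ v : Equiv.Perm (Fin 4), v ∉ D10 →
    ((Finset.univ.filter
      (fun w => w ∉ D10 ∧ (BS 4).Adj v w ∧ rk w < rk v)).card ≤ 1) := by decide

lemma BS4_degree : ∀ v : Equiv.Perm (Fin 4), (BS 4).degree v = 5 := by decide

lemma BS4_edges : (BS 4).edgeFinset.card = 60 := by decide

lemma card_perm4 : Fintype.card (Equiv.Perm (Fin 4)) = 24 := by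
  rw [Fintype.card_perm, Fintype.card_fin]
  decide

/-- Upper bound: removing `D10` leaves a forest. -/
lemma D10_acyclic : ((BS 4).induce ((↑D10 : Set (Equiv.Perm (Fin 4)))ᶜ)).IsAcyclic := by
  apply acyclic_of_rank _ (fun v => rk v.val)
  · rintro ⟨u, hu⟩ ⟨v, hv⟩ hadj
    have hu' : u ∉ D10 := by simpa using hu
    have hv' : v ∉ D10 := by simpa using hv
    exact rk_ne u v hu' hv' hadj
  · rintro ⟨v, hv⟩ ⟨w₁, hw₁⟩ ⟨w₂, hw₂⟩ h1 h2 l1 l2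
    have hv' : v ∉ D10 := by simpa using hv
    have hw₁' : w₁ ∉ D10 := by simpa using hw₁
    have hw₂' : w₂ ∉ D10 := by simpa using hw₂
    have hcard := rk_sub v hv'
    have hm₁ : w₁ ∈ Finset.univ.filter
        (fun w => w ∉ D10 ∧ (BS 4).Adj v w ∧ rk w < rk v) := by
      simp only [Finset.mem_filter, Finset.mem_univ, true_and]
      exact ⟨hw₁', h1, l1⟩
    have hm₂ : w₂ ∈ Finset.univ.filter
        (fun w => w ∉ D10 ∧ (BS 4).Adj v w ∧ rk w < rk v) := by
      simp only [Finset.mem_filter, Finset.mem_univ, true_and]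
      exact ⟨hw₂', h2, l2⟩
    exact Subtype.ext (Finset.card_le_one.1 hcard _ hm₁ _ hm₂)

/-- Lower bound argument via edge counting. -/
lemma BS4_lower (D : Finset (Equiv.Perm (Fin 4)))
    (hac : ((BS 4).induce ((↑D : Set (Equiv.Perm (Fin 4)))ᶜ)).IsAcyclic) :
    10 ≤ D.card := by
  classical
  by_contra hlt
  push_neg at hlt
  have hk : D.card ≤ 9 := by omega
  rw [← Finset.coe_compl] at hac
  have hscards : (Dᶜ : Finset (Equiv.Perm (Fin 4))).card = 24 - D.card := by
    rw [Finset.card_compl, card_perm4]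
  haveI hnonempty : Nonempty ↥(↑(Dᶜ) : Set (Equiv.Perm (Fin 4))) := by
    rw [Set.nonempty_coe_sort, Finset.coe_nonempty, ← Finset.card_pos, hscards]
    omega
  letI : Fintype ((BS 4).induce (↑(Dᶜ) : Set (Equiv.Perm (Fin 4)))).edgeSet :=
    Fintype.ofFinite _
  have hforest := card_edgeFinset_le_of_isAcyclic _ hac
  have hcardV : Fintype.card ↥(↑(Dᶜ) : Set (Equiv.Perm (Fin 4))) = 24 - D.card := by
    rw [← hscards, ← Set.toFinset_card, Finset.toFinset_coe]
  rw [hcardV] at hforest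
  set P : Sym2 (Equiv.Perm (Fin 4)) → Prop := fun e => ∀ x ∈ e, x ∈ Dᶜ with hPdef
  have hbij : ((BS 4).induce (↑(Dᶜ) : Set (Equiv.Perm (Fin 4)))).edgeFinset.card =
      ((BS 4).edgeFinset.filter P).card := by
    apply Finset.card_bij (fun e _ => Sym2.map Subtype.val e)
    · intro e he
      induction e using Sym2.ind with
      | _ a b =>
        rw [SimpleGraph.mem_edgeFinset, SimpleGraph.mem_edgeSet] at he
        have hadj : (BS 4).Adj a.val b.val := he
        rw [Finset.mem_filter]
        constructor
        · rw [Sym2.map_pair_eq, SimpleGraph.mem_edgeFinset, SimpleGraph.mem_edgeSet]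
          exact hadj
        · rw [hPdef, Sym2.map_pair_eq]
          intro x hx
          rcases Sym2.mem_iff.1 hx with rfl | rfl
          · exact a.2
          · exact b.2
    · intro e₁ _ e₂ _ hmap
      exact Sym2.map.injective Subtype.val_injective hmap
    · intro e he
      rw [Finset.mem_filter] at he
      obtain ⟨hee, hP⟩ := he
      induction e using Sym2.ind with
      | _ x y =>
        rw [SimpleGraph.mem_edgeFinset, SimpleGraph.mem_edgeSet] at hee
        have hx : x ∈ Dᶜ := hP x (Sym2.mem_mk_left x y)
        have hy : y ∈ Dᶜ := hP y (Sym2.mem_mk_right x y)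
        refine ⟨s(⟨x, hx⟩, ⟨y, hy⟩), ?_, ?_⟩
        · rw [SimpleGraph.mem_edgeFinset, SimpleGraph.mem_edgeSet]
          exact hee
        · rw [Sym2.map_pair_eq]
  have hsplit := Finset.card_filter_add_card_filter_not
    (s := (BS 4).edgeFinset) (p := P)
  have hnegle : ((BS 4).edgeFinset.filter (fun e => ¬ P e)).card ≤ 5 * D.card := by
    have hsubset : (BS 4).edgeFinset.filter (fun e => ¬ P e) ⊆
        D.biUnion (fun v => (BS 4).incidenceFinset v) := by
      intro e he
      rw [Finset.mem_filter] at he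
      obtain ⟨hee, hnP⟩ := he
      have hnP' : ¬ ∀ x ∈ e, x ∈ Dᶜ := hnP
      push_neg at hnP'
      obtain ⟨x, hxe, hxs⟩ := hnP' 
      have hxD : x ∈ D := by
        by_contra h
        exact hxs (Finset.mem_compl.2 h)
      rw [Finset.mem_biUnion]
      refine ⟨x, hxD, ?_⟩
      rw [SimpleGraph.mem_incidenceFinset]
      exact ⟨SimpleGraph.mem_edgeFinset.1 hee, hxe⟩
    calc ((BS 4).edgeFinset.filter (fun e => ¬ P e)).card
        ≤ (D.biUnion (fun v => (BS 4).incidenceFinset v)).card :=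
          Finset.card_le_card hsubset
      _ ≤ ∑ v ∈ D, ((BS 4).incidenceFinset v).card := Finset.card_biUnion_le
      _ = ∑ _v ∈ D, 5 := by
          apply Finset.sum_congr rfl
          intro v _
          rw [SimpleGraph.card_incidenceFinset_eq_degree]
          exact BS4_degree v
      _ = 5 * D.card := by rw [Finset.sum_const, smul_eq_mul, mul_comm]
  have h60 : ((BS 4).edgeFinset.filter P).card +
      ((BS 4).edgeFinset.filter (fun e => ¬ P e)).card = 60 := by
    rw [hsplit]
    exact BS4_edges
  omega

/-- The decycling number of BS_4 is 10. -/
theorem BS4_decycling : decyclingNumber (BS 4) = 10 := by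
  have h10 : 10 ∈ {k | ∃ D : Finset (Equiv.Perm (Fin 4)), D.card = k ∧
      ((BS 4).induce ((↑D : Set (Equiv.Perm (Fin 4)))ᶜ)).IsAcyclic} :=
    ⟨D10, D10_card, D10_acyclic⟩
  rw [decyclingNumber]
  apply le_antisymm
  · exact Nat.sInf_le h10
  · apply le_csInf ⟨10, h10⟩
    rintro k ⟨D, rfl, hac⟩
    exact BS4_lower D hac
end

section
/- For odd n, the set {u, R(u,1), R(u,2), ..., R(u,n-1)} of the n cyclic rotations of any vertex u of BS_n is a distance-(n-1) independent set: any two distinct members are at distance at least n-1 in BS_n. -/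
/-- `R u k` is the vertex whose label is the cyclic left-rotation of the label of `u`
by `k` positions: position `i` gets the label `u (i + k)`. -/
def R {n : ℕ} (u : Equiv.Perm (Fin n)) (k : ℕ) : Equiv.Perm (Fin n) :=
  u * (finRotate n) ^ k

open Fin.NatCast Fin.CommRing

namespace BSproof

open Equiv Equiv.Perm Finset

/-- The generators of the bubble-sort star graph. -/
def IsGen (n : ℕ) (τ : Equiv.Perm (Fin n)) : Prop :=
  ∃ i j : Fin n, i < j ∧ ((i : ℕ) = 0 ∨ (j : ℕ) = (i : ℕ) + 1) ∧ τ = Equiv.swap i j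

lemma IsGen.isSwap {n : ℕ} {τ : Equiv.Perm (Fin n)} (h : IsGen n τ) : τ.IsSwap := by
  obtain ⟨i, j, hij, -, rfl⟩ := h
  exact ⟨i, j, hij.ne, rfl⟩

lemma rot_pow_apply (N : ℕ) : ∀ (k : ℕ) (x : Fin (N + 1)),
    ((finRotate (N + 1)) ^ k) x = x + (k : Fin (N + 1)) := by
  intro k
  induction k with
  | zero => intro x; simp
  | succ k ih =>
    intro x
    rw [pow_succ', Equiv.Perm.mul_apply, finRotate_succ_apply, ih]
    push_cast
    ring

lemma rot_pow_n (N : ℕ) : (finRotate (N + 1)) ^ (N + 1) = 1 := by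
  ext x
  simp [rot_pow_apply]

lemma rot_pow_mod (N m : ℕ) :
    (finRotate (N + 1)) ^ m = (finRotate (N + 1)) ^ (m % (N + 1)) := by
  conv_lhs => rw [← Nat.div_add_mod m (N + 1)]
  rw [pow_add, pow_mul, rot_pow_n, one_pow, one_mul]

end BSproof
section
open Equiv Equiv.Perm Finset
namespace BSproof

variable {n : ℕ}

/-- One step of the swap process. -/
def Step (L : List (Equiv.Perm (Fin n))) (a b : Fin n) : Prop :=
  a ≠ b ∧ ∃ τ ∈ L, τ a = b

/-- Connectivity along the swap process. -/
def Reach (L : List (Equiv.Perm (Fin n))) : Fin n → Fin n → Prop :=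
  Relation.ReflTransGen (Step L)

lemma step_symm {L : List (Equiv.Perm (Fin n))} (hL : ∀ τ ∈ L, Equiv.Perm.IsSwap τ) :
    Symmetric (Step L) := by
  rintro a b ⟨hab, τ, hτ, rfl⟩
  obtain ⟨x, y, hxy, rfl⟩ := hL τ hτ
  exact ⟨hab.symm, _, hτ, Equiv.swap_apply_self x y a⟩

lemma reach_symm {L : List (Equiv.Perm (Fin n))} (hL : ∀ τ ∈ L, Equiv.Perm.IsSwap τ) :
    Symmetric (Reach L) :=
  by haveI : Std.Symm (Step L) := ⟨fun x y hxy => step_symm hL hxy⟩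
     exact fun a b h => (Relation.ReflTransGen.stdSymm (r := Step L)).symm a b h

lemma reach_mono {L L' : List (Equiv.Perm (Fin n))} (h : ∀ τ ∈ L, τ ∈ L') {a b : Fin n}
    (hr : Reach L a b) : Reach L' a b :=
  Relation.ReflTransGen.mono (fun x y (hxy : Step L x y) => (⟨hxy.1, by
    obtain ⟨-, τ, hτ, hx⟩ := hxy; exact ⟨τ, h τ hτ, hx⟩⟩ : Step L' x y)) a b hr

lemma reach_const {L : List (Equiv.Perm (Fin n))} {g : Fin n → Fin n}
    (hstep : ∀ a b, Step L a b → g a = g b) :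
    ∀ a b, Reach L a b → g a = g b := by
  intro a b h
  induction h with
  | refl => rfl
  | tail _ hstep' ih => exact ih.trans (hstep _ _ hstep')

/-- A single step for the list `swap x y :: L'` is either a `L'`-step or crosses from
`x` to `y`. -/
lemma step_cons_cases {L' : List (Equiv.Perm (Fin n))} {x y a b : Fin n}
    (h : Step (Equiv.swap x y :: L') a b) :
    Step L' a b ∨ (a = x ∧ b = y) ∨ (a = y ∧ b = x) := by
  obtain ⟨hne, σ, hσ, happ⟩ := h
  rcases List.mem_cons.mp hσ with rfl | hσ'
  · have hb : a = x ∨ a = y :=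
      (Equiv.swap_apply_ne_self_iff.mp (by rw [happ]; exact hne.symm)).2
    rcases hb with rfl | rfl
    · exact Or.inr (Or.inl ⟨rfl, by rw [← happ, Equiv.swap_apply_left]⟩)
    · exact Or.inr (Or.inr ⟨rfl, by rw [← happ, Equiv.swap_apply_right]⟩)
  · exact Or.inl ⟨hne, σ, hσ', happ⟩

lemma reach_prod (L : List (Equiv.Perm (Fin n))) : ∀ x, Reach L x (L.prod x) := by
  induction L with
  | nil => intro x; rw [List.prod_nil]; exact Relation.ReflTransGen.refl
  | cons τ L' ih =>
    intro x
    have h1 : Reach (τ :: L') x (L'.prod x) :=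
      reach_mono (fun σ h => List.mem_cons_of_mem _ h) (ih x)
    have h2 : (τ :: L').prod x = τ (L'.prod x) := by
      simp [List.prod_cons, Equiv.Perm.mul_apply]
    rw [h2]
    rcases eq_or_ne (τ (L'.prod x)) (L'.prod x) with he | he
    · rw [he]; exact h1
    · exact h1.tail ⟨he.symm, τ, List.mem_cons_self, rfl⟩

lemma components (L : List (Equiv.Perm (Fin n))) (hL : ∀ τ ∈ L, Equiv.Perm.IsSwap τ) :
    ∃ f : Fin n → Fin n, (∀ a b, Reach L a b → f a = f b) ∧ (∀ a, Reach L a (f a)) ∧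
      n ≤ L.length + (Finset.univ.image f).card := by
  induction L with
  | nil =>
    refine ⟨id, reach_const (fun a b hab => ?_), fun a => Relation.ReflTransGen.refl, ?_⟩
    · obtain ⟨-, τ, hτ, -⟩ := hab
      exact (List.not_mem_nil hτ).elim
    · simp [Finset.image_id]
  | cons τ L' ih =>
    have hL' : ∀ σ ∈ L', Equiv.Perm.IsSwap σ := fun σ h => hL σ (List.mem_cons_of_mem _ h)
    obtain ⟨f, h1, h2, h3⟩ := ih hL'
    obtain ⟨x, y, hxy, hτ⟩ := hL τ List.mem_cons_self
    subst hτ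
    by_cases hc : f x = f y
    · refine ⟨f, reach_const (fun a b hab => ?_), fun a =>
        reach_mono (fun σ h => List.mem_cons_of_mem _ h) (h2 a), ?_⟩
      · rcases step_cons_cases hab with h | ⟨rfl, rfl⟩ | ⟨rfl, rfl⟩
        · exact h1 _ _ (Relation.ReflTransGen.single h)
        · exact hc
        · exact hc.symm
      · simp only [List.length_cons]
        omega
    · refine ⟨fun a => if f a = f x then f y else f a,
        reach_const (fun a b hab => ?_), fun a => ?_, ?_⟩
      · rcases step_cons_cases hab with h | ⟨rfl, rfl⟩ | ⟨rfl, rfl⟩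
        · have hfe := h1 _ _ (Relation.ReflTransGen.single h)
          simp only [hfe]
        · simp [Ne.symm hc]
        · simp [Ne.symm hc]
      · have ha : Reach (Equiv.swap x y :: L') a (f a) :=
          reach_mono (fun σ h => List.mem_cons_of_mem _ h) (h2 a)
        by_cases hfa : f a = f x
        · have hxr : Reach (Equiv.swap x y :: L') x (f x) :=
            reach_mono (fun σ h => List.mem_cons_of_mem _ h) (h2 x)
          have hyr : Reach (Equiv.swap x y :: L') y (f y) :=
            reach_mono (fun σ h => List.mem_cons_of_mem _ h) (h2 y)
          have hstep : Reach (Equiv.swap x y :: L') x y :=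
            Relation.ReflTransGen.single
              ⟨hxy, _, List.mem_cons_self, Equiv.swap_apply_left x y⟩
          have hsym := reach_symm hL
          simp only [if_pos hfa]
          exact ((ha.trans (hfa ▸ hsym hxr)).trans hstep).trans hyr
        · simp only [if_neg hfa]
          exact ha
      · have hsub : Finset.univ.image f ⊆
            insert (f x) (Finset.univ.image (fun a => if f a = f x then f y else f a)) := by
          intro c hc'
          obtain ⟨a, -, rfl⟩ := Finset.mem_image.mp hc'
          by_cases hfa : f a = f x
          · rw [hfa]; exact Finset.mem_insert_self _ _
          · refine Finset.mem_insert_of_mem (Finset.mem_image.mpr ⟨a, Finset.mem_univ a, ?_⟩)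
            simp [hfa]
        have hcard : (Finset.univ.image f).card ≤
            (Finset.univ.image (fun a => if f a = f x then f y else f a)).card + 1 :=
          le_trans (Finset.card_le_card hsub) (Finset.card_insert_le _ _)
        simp only [List.length_cons]
        omega

end BSproof
end
section
open Equiv Equiv.Perm Finset
namespace BSproof

lemma core_cycle (N : ℕ) (L : List (Equiv.Perm (Fin (N + 1))))
    (hLs : ∀ τ ∈ L, Equiv.Perm.IsSwap τ)
    (hstep : ∀ x, Reach L x (finRotate (N + 1) x)) : N ≤ L.length := by
  have hpow : ∀ (k : ℕ) (x : Fin (N + 1)), Reach L x (((finRotate (N + 1)) ^ k) x) := by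
    intro k
    induction k with
    | zero => intro x; rw [pow_zero]; exact Relation.ReflTransGen.refl
    | succ k ih =>
      intro x
      rw [pow_succ, Equiv.Perm.mul_apply]
      exact (hstep x).trans (ih (finRotate (N + 1) x))
  have hall : ∀ a b : Fin (N + 1), Reach L a b := by
    intro a b
    have h := hpow (b - a).val a
    rw [rot_pow_apply, Fin.cast_val_eq_self] at h
    have he : a + (b - a) = b := by ring
    rwa [he] at h
  obtain ⟨f, h1, h2, h3⟩ := components L hLs
  have himg : Finset.univ.image f ⊆ {f 0} := by
    intro c hcm
    obtain ⟨a, -, rfl⟩ := Finset.mem_image.mp hcm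
    simp [h1 a 0 (hall a 0)]
  have hcard : (Finset.univ.image f).card ≤ 1 :=
    le_trans (Finset.card_le_card himg) (by simp)
  omega

end BSproof
end
section
open Equiv Equiv.Perm Finset
namespace BSproof

lemma core_move (N m : ℕ) (hm2 : 2 ≤ m) (hmN : m + 1 ≤ N)
    (L : List (Equiv.Perm (Fin (N + 1)))) (hL : ∀ τ ∈ L, IsGen (N + 1) τ)
    (hprod : L.prod = (finRotate (N + 1)) ^ m) : N ≤ L.length := by
  classical
  set r : Equiv.Perm (Fin (N + 1)) := finRotate (N + 1) with hr
  set t := L.length with ht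
  set P : ℕ → Equiv.Perm (Fin (N + 1)) := fun j => (L.take j).prod with hP
  set pos : ℕ → Fin (N + 1) → Fin (N + 1) := fun j a => (P j)⁻¹ a with hposdef
  have hP0 : P 0 = 1 := by simp [hP]
  have hPt : P t = r ^ m := by simp [hP, ht, hprod]
  have hPsucc : ∀ j (hj : j < t), P (j + 1) = P j * L.get ⟨j, hj⟩ := by
    intro j hj
    simpa using List.prod_take_succ L j hj
  have hposs : ∀ j (hj : j < t) (a : Fin (N + 1)),
      pos (j + 1) a = (L.get ⟨j, hj⟩)⁻¹ (pos j a) := by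
    intro j hj a
    show (P (j + 1))⁻¹ a = (L.get ⟨j, hj⟩)⁻¹ ((P j)⁻¹ a)
    rw [hPsucc j hj, mul_inv_rev, Equiv.Perm.mul_apply]
  -- stationary intervals
  have hstat : ∀ (a : Fin (N + 1)) (j1 j2 : ℕ), j1 ≤ j2 →
      (∀ j, j1 ≤ j → j < j2 → pos (j + 1) a = pos j a) → pos j2 a = pos j1 a := by
    intro a j1 j2 h12
    induction j2, h12 using Nat.le_induction with
    | base => intro _; rfl
    | succ j2 hj2 ih =>
      intro hnm
      rw [hnm j2 hj2 (Nat.lt_succ_self _)]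
      exact ih fun j hj1 hj2' => hnm j hj1 (Nat.lt_succ_of_lt hj2')
  -- the moves of a symbol
  set Mv : Fin (N + 1) → Finset ℕ :=
    fun a => (Finset.range t).filter (fun j => pos (j + 1) a ≠ pos j a) with hMv
  -- each step moves exactly two symbols
  have hstep2 : ∀ j, j < t →
      (Finset.univ.filter (fun a : Fin (N + 1) => pos (j + 1) a ≠ pos j a)).card = 2 := by
    intro j hj
    have himg : Finset.univ.filter (fun a : Fin (N + 1) => pos (j + 1) a ≠ pos j a)
        = (L.get ⟨j, hj⟩).support.image (P j) := by
      ext a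
      simp only [Finset.mem_filter, Finset.mem_univ, true_and, hposs j hj a]
      constructor
      · intro h
        have hmem : (P j)⁻¹ a ∈ ((L.get ⟨j, hj⟩)⁻¹).support :=
          Equiv.Perm.mem_support.mpr (by simpa [hposdef] using h)
        rw [Equiv.Perm.support_inv] at hmem
        exact Finset.mem_image.mpr ⟨(P j)⁻¹ a, hmem, by simp⟩
      · intro hmem
        obtain ⟨b, hb, rfl⟩ := Finset.mem_image.mp hmem
        have hb' : b ∈ ((L.get ⟨j, hj⟩)⁻¹).support := by rwa [Equiv.Perm.support_inv]
        have hbne := Equiv.Perm.mem_support.mp hb'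
        simpa [hposdef] using hbne
    rw [himg, Finset.card_image_of_injective _ (Equiv.injective _)]
    obtain ⟨i1, i2, hij, -, hswap⟩ := hL (L.get ⟨j, hj⟩) (L.get_mem _)
    rw [hswap]
    exact Equiv.Perm.card_support_swap hij.ne
  -- total move count
  have hsum : (∑ a : Fin (N + 1), (Mv a).card) = 2 * t := by
    simp only [hMv, Finset.card_filter]
    rw [Finset.sum_comm]
    have hc : ∀ j ∈ Finset.range t,
        (∑ a : Fin (N + 1), if pos (j + 1) a ≠ pos j a then 1 else 0) = 2 := by
      intro j hj
      rw [← Finset.card_filter]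
      exact hstep2 j (Finset.mem_range.mp hj)
    rw [Finset.sum_congr rfl hc, Finset.sum_const, Finset.card_range, smul_eq_mul, Nat.mul_comm]
  have hpos0 : ∀ a, pos 0 a = a := by intro a; show (P 0)⁻¹ a = a; rw [hP0]; rfl
  have hpost : ∀ a, pos t a = (r ^ m)⁻¹ a := by intro a; simp [hposdef, hPt]
  have hmlt : m < N + 1 := by omega
  have hmbar : ((m : Fin (N + 1))) ≠ 0 := by
    intro h
    have hv := Fin.val_cast_of_lt hmlt
    rw [h] at hv
    simp at hv
    omega
  -- every symbol moves at least once
  have hM1 : ∀ a, 1 ≤ (Mv a).card := by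
    intro a
    by_contra h
    push_neg at h
    have hcard0 : (Mv a).card = 0 := by omega
    have hemp : ∀ j, 0 ≤ j → j < t → pos (j + 1) a = pos j a := by
      intro j _ hj
      by_contra hne
      have hmem : j ∈ Mv a := Finset.mem_filter.mpr ⟨Finset.mem_range.mpr hj, hne⟩
      rw [Finset.card_eq_zero.mp hcard0] at hmem
      simp at hmem
    have hT := hstat a 0 t (Nat.zero_le t) hemp
    rw [hpost, hpos0] at hT
    apply hmbar
    have h2 : (r ^ m) a = a := by
      conv_lhs => rw [← hT]
      simp
    rw [hr, rot_pow_apply] at h2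
    exact add_eq_left.mp h2
  -- a symbol moving exactly once is 0 or m
  have hM2 : ∀ a : Fin (N + 1), a ≠ 0 → a ≠ (m : Fin (N + 1)) → 2 ≤ (Mv a).card := by
    intro a ha0 ham
    rcases Nat.lt_or_ge (Mv a).card 2 with hlt | hge
    · exfalso
      have hcard1 : (Mv a).card = 1 := le_antisymm (by omega) (hM1 a)
      obtain ⟨j0, hj0⟩ := Finset.card_eq_one.mp hcard1
      have hj0mem : j0 ∈ Mv a := hj0 ▸ Finset.mem_singleton_self j0
      have hj0t : j0 < t := Finset.mem_range.mp (Finset.mem_filter.mp hj0mem).1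
      have hj0mv : pos (j0 + 1) a ≠ pos j0 a := (Finset.mem_filter.mp hj0mem).2
      have honly : ∀ j, j < t → j ≠ j0 → pos (j + 1) a = pos j a := by
        intro j hj hne
        by_contra hmv
        have hmem : j ∈ Mv a := Finset.mem_filter.mpr ⟨Finset.mem_range.mpr hj, hmv⟩
        rw [hj0] at hmem
        exact hne (Finset.mem_singleton.mp hmem)
      have hbefore : pos j0 a = a := by
        rw [← hpos0 a]
        exact hstat a 0 j0 (Nat.zero_le _)
          (fun j _ hj => honly j (hj.trans hj0t) (Nat.ne_of_lt hj))
      have hafter : pos t a = pos (j0 + 1) a :=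
        hstat a (j0 + 1) t hj0t (fun j hj1 hj2 => honly j hj2 (by omega))
      obtain ⟨i1, i2, hij, hcond, hswap⟩ := hL (L.get ⟨j0, hj0t⟩) (L.get_mem _)
      have hposs' := hposs j0 hj0t a
      rw [hbefore, hswap, Equiv.swap_inv] at hposs'
      -- hposs' : pos (j0+1) a = swap i1 i2 a
      have hta : Equiv.swap i1 i2 a ≠ a := by
        intro he
        exact hj0mv (by rw [hposs', he, hbefore])
      have hacase : a = i1 ∨ a = i2 := (Equiv.swap_apply_ne_self_iff.mp hta).2
      -- the displacement equation
      have hdelta : Equiv.swap i1 i2 a = (r ^ m)⁻¹ a := by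
        rw [← hposs', ← hafter, hpost]
      have haeq : a = Equiv.swap i1 i2 a + (m : Fin (N + 1)) := by
        have : (r ^ m) ((r ^ m)⁻¹ a) = a := by simp
        rw [hr, rot_pow_apply] at this
        rw [hdelta, this]
      rcases hcond with hstar | hadj
      · -- star generator : i1 = 0
        have hi1 : i1 = 0 := by
          apply Fin.ext
          simpa using hstar
        rcases hacase with rfl | rfl
        · exact ha0 hi1
        · apply ham
          rw [Equiv.swap_apply_right, hi1] at haeq
          rw [haeq, zero_add]
      · -- adjacent generator : (i2 : ℕ) = i1 + 1
        have hi2v : (i2 : ℕ) = (i1 : ℕ) + 1 := hadj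
        have hi1lt : i1 < Fin.last N := by
          rw [Fin.lt_iff_val_lt_val, Fin.val_last]
          have := i2.isLt
          omega
        have hi2eq : i2 = i1 + 1 := by
          apply Fin.ext
          rw [hi2v, Fin.val_add_one_of_lt hi1lt]
        rcases hacase with rfl | rfl
        · -- a = i1 : swap a = i2 = a + 1, so a = a + 1 + m
          rw [Equiv.swap_apply_left, hi2eq] at haeq
          have h1m : (1 : Fin (N + 1)) + (m : Fin (N + 1)) = 0 := by
            have := haeq
            rw [add_assoc] at this
            exact (add_eq_left.mp this.symm)
          have hcast : ((1 + m : ℕ) : Fin (N + 1)) = 0 := by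
            push_cast
            exact h1m
          have hv := Fin.val_cast_of_lt (show 1 + m < N + 1 by omega)
          rw [hcast] at hv
          simp at hv
          omega
        · -- a = i2 = i1 + 1 : swap a = i1 = a - 1, so a = a - 1 + m
          rw [Equiv.swap_apply_right] at haeq
          rw [hi2eq] at haeq
          -- haeq : i1 + 1 = i1 + m
          have hm1 : (m : Fin (N + 1)) = 1 := by
            have := haeq
            exact (add_right_injective i1 this).symm
          have h1c : (1 : Fin (N + 1)) = ((1 : ℕ) : Fin (N + 1)) := by norm_num
          have hv := congrArg Fin.val hm1
          rw [Fin.val_cast_of_lt hmlt, h1c,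
            Fin.val_cast_of_lt (show (1 : ℕ) < N + 1 by omega)] at hv
          omega
    · exact hge
  -- final count
  set B : Finset (Fin (N + 1)) := {0, (m : Fin (N + 1))} with hB
  have hfinal : ∀ a : Fin (N + 1), 2 ≤ (Mv a).card + (if a ∈ B then 1 else 0) := by
    intro a
    by_cases hmem : a ∈ B
    · rw [if_pos hmem]
      have := hM1 a
      omega
    · rw [if_neg hmem]
      simp only [hB, Finset.mem_insert, Finset.mem_singleton, not_or] at hmem
      have := hM2 a hmem.1 hmem.2
      omega
  have hsum2 : 2 * (N + 1) ≤ (∑ a : Fin (N + 1), ((Mv a).card + if a ∈ B then 1 else 0)) := by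
    calc 2 * (N + 1) = ∑ _a : Fin (N + 1), 2 := by
          simp [Finset.sum_const, Finset.card_univ, Nat.mul_comm]
    _ ≤ _ := Finset.sum_le_sum (fun a _ => hfinal a)
  rw [Finset.sum_add_distrib, hsum] at hsum2
  have hBcard : (∑ a : Fin (N + 1), if a ∈ B then 1 else 0) ≤ 2 := by
    rw [Finset.sum_ite_mem, Finset.univ_inter, Finset.sum_const, smul_eq_mul, mul_one]
    calc B.card ≤ ({(m : Fin (N + 1))} : Finset (Fin (N + 1))).card + 1 :=
          Finset.card_insert_le _ _
    _ ≤ 2 := by simp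
  omega

end BSproof
end
section
open Equiv Equiv.Perm Finset
namespace BSproof

lemma core (N m : ℕ) (hm : 0 < m) (hmn : m < N + 1)
    (L : List (Equiv.Perm (Fin (N + 1)))) (hL : ∀ τ ∈ L, IsGen (N + 1) τ)
    (hprod : L.prod = (finRotate (N + 1)) ^ m) : N ≤ L.length := by
  by_cases hcase : m = 1 ∨ m = N
  · have hLs : ∀ τ ∈ L, Equiv.Perm.IsSwap τ := fun τ h => (hL τ h).isSwap
    apply core_cycle N L hLs
    have hp := reach_prod L
    rcases hcase with rfl | hNm
    · intro x
      have h := hp x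
      rw [hprod, pow_one] at h
      exact h
    · intro x
      have h1 := hp (finRotate (N + 1) x)
      rw [hprod, hNm] at h1
      have h2 : ((finRotate (N + 1)) ^ N) (finRotate (N + 1) x) = x := by
        have h3 : ((finRotate (N + 1)) ^ N) (finRotate (N + 1) x)
            = ((finRotate (N + 1)) ^ (N + 1)) x := by
          rw [pow_succ, Equiv.Perm.mul_apply]
        rw [h3, rot_pow_n]
        rfl
      rw [h2] at h1
      exact reach_symm hLs h1
  · push_neg at hcase
    exact core_move N m (by omega) (by omega) L hL hprod

/-- Adjacent vertices differ by right multiplication by a generator. -/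
lemma adj_gen {n : ℕ} {x y : Equiv.Perm (Fin n)} (h : (BS n).Adj x y) :
    ∃ τ, IsGen n τ ∧ y = x * τ := by
  rw [BS, SimpleGraph.fromRel_adj] at h
  obtain ⟨-, h | h⟩ := h
  · obtain ⟨i, j, hij, hcond, hy⟩ := h
    exact ⟨Equiv.swap i j, ⟨i, j, hij, hcond, rfl⟩, hy⟩
  · obtain ⟨i, j, hij, hcond, hx⟩ := h
    refine ⟨Equiv.swap i j, ⟨i, j, hij, hcond, rfl⟩, ?_⟩
    rw [hx, mul_assoc, Equiv.swap_mul_self, mul_one]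

lemma walk_list {n : ℕ} {x y : Equiv.Perm (Fin n)} (p : (BS n).Walk x y) :
    ∃ L : List (Equiv.Perm (Fin n)), (∀ τ ∈ L, IsGen n τ) ∧ L.length = p.length ∧
      y = x * L.prod := by
  induction p with
  | nil => exact ⟨[], by simp, by simp, by simp⟩
  | cons h p ih =>
    obtain ⟨τ, hτ, hz⟩ := adj_gen h
    obtain ⟨L, hL, hlen, hprod⟩ := ih
    refine ⟨τ :: L, ?_, by simp [hlen], ?_⟩
    · intro σ hσ
      rcases List.mem_cons.mp hσ with rfl | hσ'
      · exact hτ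
      · exact hL σ hσ'
    · rw [List.prod_cons, ← mul_assoc, ← hz, hprod]

lemma reachable_mul (N : ℕ) (x σ : Equiv.Perm (Fin (N + 1))) :
    (BS (N + 1)).Reachable x (x * σ) := by
  have hstar : ∀ c : Fin (N + 1), c ≠ 0 →
      Equiv.swap 0 c ∈ Subgroup.closure {τ : Equiv.Perm (Fin (N + 1)) | IsGen (N + 1) τ} :=
    fun c hc => Subgroup.subset_closure ⟨0, c, Fin.pos_of_ne_zero hc, Or.inl rfl, rfl⟩
  have htop : Subgroup.closure {τ : Equiv.Perm (Fin (N + 1)) | IsGen (N + 1) τ} = ⊤ := by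
    rw [eq_top_iff, ← Equiv.Perm.closure_isSwap]
    rw [Subgroup.closure_le]
    rintro σ' ⟨a, b, hab, rfl⟩
    by_cases ha : a = 0
    · subst ha
      exact hstar b (Ne.symm hab)
    · by_cases hb : b = 0
      · subst hb
        rw [Equiv.swap_comm]
        exact hstar a ha
      · have hkey := Equiv.swap_mul_swap_mul_swap (x := b) (y := 0) (z := a) hb (Ne.symm hab)
        have : Equiv.swap a b = Equiv.swap 0 a * Equiv.swap b 0 * Equiv.swap 0 a := by
          rw [hkey]
        rw [this]
        exact Subgroup.mul_mem _
          (Subgroup.mul_mem _ (hstar a ha) (by rw [Equiv.swap_comm]; exact hstar b hb))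
          (hstar a ha)
  have key : ∀ σ ∈ Subgroup.closure {τ : Equiv.Perm (Fin (N + 1)) | IsGen (N + 1) τ},
      ∀ x : Equiv.Perm (Fin (N + 1)), (BS (N + 1)).Reachable x (x * σ) := by
    intro σ hσ
    induction hσ using Subgroup.closure_induction with
    | mem τ hτ =>
      intro x
      apply SimpleGraph.Adj.reachable
      rw [BS, SimpleGraph.fromRel_adj]
      obtain ⟨i, j, hij, hcond, rfl⟩ := hτ
      refine ⟨?_, Or.inl ⟨i, j, hij, hcond, rfl⟩⟩
      intro hcontra
      have : Equiv.swap i j = 1 := by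
        have := mul_eq_left.mp hcontra.symm
        exact this
      exact hij.ne (Equiv.swap_eq_one_iff.mp this)
    | one => intro x; rw [mul_one]
    | mul a b _ _ pa pb =>
      intro x
      rw [← mul_assoc]
      exact (pa x).trans (pb (x * a))
    | inv a _ pa =>
      intro x
      have h := pa (x * a⁻¹)
      rw [inv_mul_cancel_right] at h
      exact h.symm
  exact key σ (htop ▸ Subgroup.mem_top σ) x

end BSproof
end
/-- For odd n, the n cyclic rotations of any vertex u of BS_n form a
distance-(n-1) independent set: any two distinct members are at distance
at least n - 1. -/
theorem BS_rotations_independent (n : ℕ) (hn : Odd n) (u : Equiv.Perm (Fin n))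
    (k l : ℕ) (hk : k < n) (hl : l < n) (hne : R u k ≠ R u l) :
    n - 1 ≤ (BS n).dist (R u k) (R u l) := by
  obtain ⟨N, rfl⟩ : ∃ N, n = N + 1 := ⟨n - 1, by have := hn.pos; omega⟩
  have hreach : (BS (N + 1)).Reachable (R u k) (R u l) := by
    have hRl : R u l = R u k * (((finRotate (N + 1)) ^ k)⁻¹ * (finRotate (N + 1)) ^ l) := by
      rw [R, R, mul_assoc, mul_inv_cancel_left]
    rw [hRl]
    exact BSproof.reachable_mul N _ _
  obtain ⟨p, hp⟩ := hreach.exists_walk_length_eq_dist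
  obtain ⟨L, hgen, hlen, hprod⟩ := BSproof.walk_list p
  have h1 : (finRotate (N + 1)) ^ k * L.prod = (finRotate (N + 1)) ^ l := by
    have h := hprod
    rw [R, R, mul_assoc] at h
    exact (mul_left_cancel h).symm
  have hprod2 : L.prod = (finRotate (N + 1)) ^ ((N + 1 - k + l) % (N + 1)) := by
    have h2 : (finRotate (N + 1)) ^ (N + 1 - k) * (finRotate (N + 1)) ^ k = 1 := by
      rw [← pow_add, show N + 1 - k + k = N + 1 by omega, BSproof.rot_pow_n]
    calc L.prod = (finRotate (N + 1)) ^ (N + 1 - k) * ((finRotate (N + 1)) ^ k * L.prod) := by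
          rw [← mul_assoc, h2, one_mul]
    _ = (finRotate (N + 1)) ^ (N + 1 - k) * (finRotate (N + 1)) ^ l := by rw [h1]
    _ = (finRotate (N + 1)) ^ (N + 1 - k + l) := by rw [← pow_add]
    _ = _ := BSproof.rot_pow_mod N _
  set m := (N + 1 - k + l) % (N + 1) with hm
  have hmlt : m < N + 1 := Nat.mod_lt _ (by omega)
  have hm0 : m ≠ 0 := by
    intro h0
    apply hne
    have hL1 : L.prod = 1 := by rw [hprod2, h0, pow_zero]
    rw [hL1, mul_one] at hprod
    exact hprod.symm
  have hcore := BSproof.core N m (Nat.pos_of_ne_zero hm0) hmlt L hgen hprod2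
  rw [← hp, ← hlen]
  omega
end

section
/- In BS_4, for any odd vertex u, the pair {u, R(u,2)} together with the set of even vertices induces an acyclic subgraph; hence 10 vertices suffice as a decycling set of BS_4, and d(u, R(u,2)) = 4. -/
open SimpleGraph Equiv Equiv.Perm

/-- Characterization of adjacency in `BS n`. -/
lemma BS_adj {n : ℕ} {x y : Equiv.Perm (Fin n)} :
    (BS n).Adj x y ↔ x ≠ y ∧ ∃ i j : Fin n, i < j ∧
      ((i : ℕ) = 0 ∨ (j : ℕ) = (i : ℕ) + 1) ∧ y = x * Equiv.swap i j := by
  constructor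
  · intro h
    rw [BS, SimpleGraph.fromRel_adj] at h
    obtain ⟨hne, h | h⟩ := h
    · exact ⟨hne, h⟩
    · obtain ⟨i, j, h1, h2, h3⟩ := h
      exact ⟨hne, i, j, h1, h2, by rw [h3, mul_assoc, Equiv.swap_mul_self, mul_one]⟩
  · rintro ⟨hne, h⟩
    rw [BS, SimpleGraph.fromRel_adj]
    exact ⟨hne, Or.inl h⟩

/-- Adjacent vertices have opposite sign. -/
lemma BS_adj_sign {n : ℕ} {x y : Equiv.Perm (Fin n)} (h : (BS n).Adj x y) :
    Equiv.Perm.sign y = -Equiv.Perm.sign x := by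
  obtain ⟨hne, i, j, hij, _, rfl⟩ := BS_adj.mp h
  rw [map_mul, Equiv.Perm.sign_swap (ne_of_lt hij), mul_neg_one]

/-- Sign along a walk. -/
lemma BS_walk_sign {n : ℕ} {x y : Equiv.Perm (Fin n)} (p : (BS n).Walk x y) :
    Equiv.Perm.sign y = Equiv.Perm.sign x * (-1) ^ p.length := by
  induction p with
  | nil => simp
  | cons h q ih =>
      rw [SimpleGraph.Walk.length_cons, pow_succ]
      rw [ih, BS_adj_sign h, ← mul_assoc, mul_neg_one, neg_mul]

lemma no_two_swaps : ∀ i j k l : Fin 4, i < j → k < l →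
    ((i : ℕ) = 0 ∨ (j : ℕ) = (i : ℕ) + 1) → ((k : ℕ) = 0 ∨ (l : ℕ) = (k : ℕ) + 1) →
    Equiv.swap i j * Equiv.swap k l ≠ (finRotate 4) ^ 2 := by decide

/-- `u` and `R u 2` have no common neighbour in `BS 4`. -/
lemma BS_no_common {u w : Equiv.Perm (Fin 4)}
    (h1 : (BS 4).Adj u w) (h2 : (BS 4).Adj (R u 2) w) : False := by
  obtain ⟨_, i, j, hij, hc, rfl⟩ := BS_adj.mp h1
  obtain ⟨_, k, l, hkl, hc2, he⟩ := BS_adj.mp h2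
  have hR : R u 2 = u * (finRotate 4) ^ 2 := rfl
  rw [hR, mul_assoc] at he
  have h3 : Equiv.swap i j = (finRotate 4) ^ 2 * Equiv.swap k l := mul_left_cancel he
  have h4 : Equiv.swap i j * Equiv.swap k l = (finRotate 4) ^ 2 := by
    rw [h3, mul_assoc, Equiv.swap_mul_self, mul_one]
  exact no_two_swaps i j k l hij hkl hc hc2 h4

/-- Abstract acyclicity criterion: if adjacency flips parity, the only two "odd"
vertices are `a` and `b`, and `a`, `b` have no common neighbour, then the graph
is acyclic. -/
lemma acyclic_of_two_odd {V : Type*} (G : SimpleGraph V) (odd : V → Prop) (a b : V)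
    (hpar : ∀ {x y : V}, G.Adj x y → (odd x ↔ ¬ odd y))
    (hab : ∀ x : V, odd x → x = a ∨ x = b)
    (hcn : ∀ w : V, ¬ (G.Adj a w ∧ G.Adj b w)) : G.IsAcyclic := by
  classical
  have key : ∀ (x : V), ¬ odd x → ∀ (c : G.Walk x x), ¬ c.IsCycle := by
    intro x hx c hc
    cases c with
    | nil => exact hc.not_of_nil
    | @cons _ v1 _ h1 r =>
      cases r with
      | nil =>
          have := hc.three_le_length
          simp at this
      | @cons _ v2 _ h2 r2 =>
        cases r2 with
        | nil =>
            have := hc.three_le_length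
            simp at this
        | @cons _ v3 _ h3 q3 =>
          have hv1 : odd v1 := by
            by_contra hv
            exact hx ((hpar h1).mpr hv)
          have hv2 : ¬ odd v2 := (hpar h2).mp hv1
          have hv3 : odd v3 := by
            by_contra hv
            exact hv2 ((hpar h3).mpr hv)
          have hnd := hc.support_nodup
          have hne13 : v1 ≠ v3 := by
            intro hEq
            have hmem : v1 ∈ q3.support := hEq ▸ q3.start_mem_support
            simp only [SimpleGraph.Walk.support_cons, List.tail_cons, List.nodup_cons,
              List.mem_cons] at hnd
            exact hnd.1 (Or.inr hmem)
          rcases hab v1 hv1 with rfl | rfl <;> rcases hab v3 hv3 with h5 | h5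
          · exact hne13 h5.symm
          · exact hcn v2 ⟨h2, h5 ▸ h3.symm⟩
          · exact hcn v2 ⟨h5 ▸ h3.symm, h2⟩
          · exact hne13 h5.symm
  intro x c hc
  by_cases hx : odd x
  · cases c with
    | nil => exact hc.not_of_nil
    | @cons _ v1 _ h q =>
      have hv1 : ¬ odd v1 := (hpar h).mp hx
      have hmem : v1 ∈ (SimpleGraph.Walk.cons h q).support := by
        simp [SimpleGraph.Walk.support_cons]
      exact key v1 hv1 _ (hc.rotate hmem)
  · exact key x hx c hc

lemma sign_R2 (u : Equiv.Perm (Fin 4)) (hu : Equiv.Perm.sign u = -1) :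
    Equiv.Perm.sign (R u 2) = -1 := by
  have h1 : ((Equiv.Perm.sign (finRotate 4)) ^ 2 : ℤˣ) = 1 := by decide
  rw [R, map_mul, map_pow, h1, mul_one, hu]

/-- Main acyclicity statement, for any odd `u`. -/
lemma BS4_induce_acyclic (u : Equiv.Perm (Fin 4)) (hu : Equiv.Perm.sign u = -1) :
    ((BS 4).induce
      ({u, R u 2} ∪ {v : Equiv.Perm (Fin 4) | Equiv.Perm.sign v = 1})).IsAcyclic := by
  have hsR : Equiv.Perm.sign (R u 2) = -1 := sign_R2 u hu
  set S : Set (Equiv.Perm (Fin 4)) :=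
    {u, R u 2} ∪ {v : Equiv.Perm (Fin 4) | Equiv.Perm.sign v = 1} with hS
  have hmu : u ∈ S := Or.inl (Or.inl rfl)
  have hmv : R u 2 ∈ S := Or.inl (Or.inr rfl)
  apply acyclic_of_two_odd _ (fun x : S => Equiv.Perm.sign x.1 = -1) ⟨u, hmu⟩ ⟨R u 2, hmv⟩
  · intro x y hxy
    have hadj : (BS 4).Adj x.1 y.1 := hxy
    have hflip := BS_adj_sign hadj
    constructor
    · intro hx h2
      rw [h2, hx] at hflip
      exact absurd hflip (by decide)
    · intro hy
      rcases Int.units_eq_one_or (Equiv.Perm.sign y.1) with h1 | h1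
      · rw [h1] at hflip
        exact neg_eq_iff_eq_neg.mp hflip.symm
      · exact absurd h1 hy
  · rintro ⟨x, hx⟩ hodd
    simp only at hodd
    rcases hx with hx | hx
    · rcases hx with hx | hx
      · exact Or.inl (Subtype.ext hx)
      · exact Or.inr (Subtype.ext hx)
    · rw [Set.mem_setOf_eq] at hx
      rw [hx] at hodd
      exact absurd hodd (by decide)
  · rintro ⟨w, hw⟩ ⟨h1, h2⟩
    exact BS_no_common (h1 : (BS 4).Adj u w) (h2 : (BS 4).Adj (R u 2) w)

lemma walk2_common {V : Type*} {G : SimpleGraph V} {a b : V} (q : G.Walk a b)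
    (h2 : q.length = 2) : ∃ w, G.Adj a w ∧ G.Adj w b := by
  cases q with
  | nil => simp at h2
  | @cons _ v1 _ ha qa =>
    cases qa with
    | nil => simp at h2
    | @cons _ v2 _ hb qb =>
      have hlb : qb.length = 0 := by
        simp only [SimpleGraph.Walk.length_cons] at h2
        omega
      have hv2 : v2 = b := SimpleGraph.Walk.eq_of_length_eq_zero hlb
      subst hv2
      exact ⟨v1, ha, hb⟩

lemma BS_adj_mul (x : Equiv.Perm (Fin 4)) (i j : Fin 4) (hij : i < j)
    (hc : (i : ℕ) = 0 ∨ (j : ℕ) = (i : ℕ) + 1) :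
    (BS 4).Adj x (x * Equiv.swap i j) := by
  rw [BS_adj]
  refine ⟨?_, i, j, hij, hc, rfl⟩
  intro hxx
  have h1 : Equiv.swap i j = 1 := by
    have h2 : x * 1 = x * Equiv.swap i j := by rw [mul_one]; exact hxx
    exact (mul_left_cancel h2).symm
  exact (ne_of_lt hij) (Equiv.swap_eq_one_iff.mp h1)

/-- In BS_4, for any odd vertex u, the pair {u, R(u,2)} together with all even
vertices induces an acyclic subgraph; hence 10 vertices suffice as a decycling set
of BS_4, and d(u, R(u,2)) = 4. -/
theorem BS4_pair_acyclic (u : Equiv.Perm (Fin 4)) (hu : Equiv.Perm.sign u = -1) :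
    ((BS 4).induce ({u, R u 2} ∪ {v : Equiv.Perm (Fin 4) | Equiv.Perm.sign v = 1})).IsAcyclic ∧
    (∃ D : Finset (Equiv.Perm (Fin 4)), D.card = 10 ∧
      ((BS 4).induce ((↑D : Set (Equiv.Perm (Fin 4)))ᶜ)).IsAcyclic) ∧
    (BS 4).dist u (R u 2) = 4 := by
  refine ⟨BS4_induce_acyclic u hu, ?_, ?_⟩
  · -- decycling set of size 10
    refine ⟨Finset.univ.filter (fun v : Equiv.Perm (Fin 4) =>
      Equiv.Perm.sign v = -1 ∧ v ≠ Equiv.swap 0 1 ∧ v ≠ R (Equiv.swap 0 1) 2),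
      by decide, ?_⟩
    have hset : ((↑(Finset.univ.filter (fun v : Equiv.Perm (Fin 4) =>
        Equiv.Perm.sign v = -1 ∧ v ≠ Equiv.swap 0 1 ∧ v ≠ R (Equiv.swap 0 1) 2)) :
          Set (Equiv.Perm (Fin 4)))ᶜ) =
        ({Equiv.swap 0 1, R (Equiv.swap 0 1) 2} ∪
          {v : Equiv.Perm (Fin 4) | Equiv.Perm.sign v = 1}) := by
      ext x
      simp only [Finset.coe_filter, Finset.mem_univ, true_and, Set.mem_compl_iff,
        Set.mem_setOf_eq, Set.mem_union, Set.mem_insert_iff, Set.mem_singleton_iff]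
      constructor
      · intro h
        by_cases h1 : x = Equiv.swap 0 1
        · exact Or.inl (Or.inl h1)
        by_cases h2 : x = R (Equiv.swap 0 1) 2
        · exact Or.inl (Or.inr h2)
        rcases Int.units_eq_one_or (Equiv.Perm.sign x) with hs | hs
        · exact Or.inr hs
        · exact absurd ⟨hs, h1, h2⟩ h
      · rintro (h | h) hcon
        · rcases h with h | h
          · exact hcon.2.1 h
          · exact hcon.2.2 h
        · rw [h] at hcon
          exact absurd hcon.1 (by decide)
    rw [hset]
    exact BS4_induce_acyclic (Equiv.swap 0 1) (by decide)
  · -- distance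
    have hsR : Equiv.Perm.sign (R u 2) = -1 := sign_R2 u hu
    have hprod : Equiv.swap (0 : Fin 4) 1 * Equiv.swap (0 : Fin 4) 2 *
        Equiv.swap (2 : Fin 4) 3 * Equiv.swap (1 : Fin 4) 2 = (finRotate 4) ^ 2 := by decide
    have hR4 : R u 2 = u * Equiv.swap (0 : Fin 4) 1 * Equiv.swap (0 : Fin 4) 2 *
        Equiv.swap (2 : Fin 4) 3 * Equiv.swap (1 : Fin 4) 2 := by
      rw [R, ← hprod]
      simp [mul_assoc]
    let p : (BS 4).Walk u (u * Equiv.swap (0 : Fin 4) 1 * Equiv.swap (0 : Fin 4) 2 *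
        Equiv.swap (2 : Fin 4) 3 * Equiv.swap (1 : Fin 4) 2) :=
      .cons (BS_adj_mul u 0 1 (by decide) (by decide))
        (.cons (BS_adj_mul _ 0 2 (by decide) (by decide))
          (.cons (BS_adj_mul _ 2 3 (by decide) (by decide))
            (.cons (BS_adj_mul _ 1 2 (by decide) (by decide)) .nil)))
    have hreach : (BS 4).Reachable u (R u 2) := by
      rw [hR4]; exact ⟨p⟩
    have hle : (BS 4).dist u (R u 2) ≤ 4 := by
      have hlen : p.length = 4 := rfl
      rw [hR4]
      exact le_trans (SimpleGraph.dist_le p) (le_of_eq hlen)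
    obtain ⟨q, hq⟩ := hreach.exists_walk_length_eq_dist
    have hsign := BS_walk_sign q
    rw [hu, hsR] at hsign
    have heven : Even q.length := by
      rcases Nat.even_or_odd q.length with he | ho
      · exact he
      · rw [ho.neg_one_pow] at hsign
        exact absurd hsign (by decide)
    have hne0 : q.length ≠ 0 := by
      intro h0
      have h1 : u = R u 2 := SimpleGraph.Walk.eq_of_length_eq_zero h0
      have h2 : ((finRotate 4) ^ 2 : Equiv.Perm (Fin 4)) = 1 := by
        have h3 : u * 1 = u * (finRotate 4) ^ 2 := by
          rw [mul_one]; exact h1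
        exact (mul_left_cancel h3).symm
      exact absurd h2 (by decide)
    have hne2 : q.length ≠ 2 := by
      intro h2
      obtain ⟨w, hw1, hw2⟩ := walk2_common q h2
      exact BS_no_common hw1 hw2.symm
    obtain ⟨k, hk⟩ := heven
    omega
end

section
/- For even n, the paired permutation vertex set P(u) of a vertex u of BS_n has cardinality (n/2)!, and all its members have the same inversion parity as u. -/
/-- The paired permutation vertex set of `u` (for even length `2*m`): the set of
permutations obtained by rearranging the `m` consecutive pair blocks
`u_1u_2, u_3u_4, ..., u_{2m-1}u_{2m}` in any order (keeping each pair intact). -/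
def pairedSet {m : ℕ} (u : Equiv.Perm (Fin (2 * m))) : Set (Equiv.Perm (Fin (2 * m))) :=
  {v | ∃ σ : Equiv.Perm (Fin m), ∀ j : Fin m,
    v ⟨2 * (j : ℕ), by have := j.isLt; omega⟩ = u ⟨2 * ((σ j : Fin m) : ℕ), by have := (σ j).isLt; omega⟩ ∧
    v ⟨2 * (j : ℕ) + 1, by have := j.isLt; omega⟩ = u ⟨2 * ((σ j : Fin m) : ℕ) + 1, by have := (σ j).isLt; omega⟩}

namespace PairedAux

variable {m : ℕ}

/-- The equivalence `Fin m × Fin 2 ≃ Fin (2 * m)`, sending `(j, r)` to `2*j + r`. -/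
def e (m : ℕ) : Fin m × Fin 2 ≃ Fin (2 * m) :=
  finProdFinEquiv.trans (finCongr (Nat.mul_comm m 2))

lemma e_eq0 (j : Fin m) : e m (j, 0) = ⟨2 * (j : ℕ), by have := j.isLt; omega⟩ := by
  apply Fin.ext; simp [e, finProdFinEquiv]

lemma e_eq1 (j : Fin m) : e m (j, 1) = ⟨2 * (j : ℕ) + 1, by have := j.isLt; omega⟩ := by
  apply Fin.ext; simp [e, finProdFinEquiv]; omega

/-- The block permutation induced by `σ : Perm (Fin m)`. -/
def B (σ : Equiv.Perm (Fin m)) : Equiv.Perm (Fin (2 * m)) :=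
  (e m).permCongr (Equiv.prodCongrLeft fun _ : Fin 2 => σ)

lemma B_apply (σ : Equiv.Perm (Fin m)) (j : Fin m) (r : Fin 2) :
    B σ (e m (j, r)) = e m (σ j, r) := by
  simp [B, Equiv.permCongr_apply, Equiv.prodCongrLeft]

lemma B_apply0 (σ : Equiv.Perm (Fin m)) (j : Fin m) :
    B σ ⟨2 * (j : ℕ), by have := j.isLt; omega⟩
      = ⟨2 * ((σ j : Fin m) : ℕ), by have := (σ j).isLt; omega⟩ := by
  rw [← e_eq0, ← e_eq0, B_apply]

lemma B_apply1 (σ : Equiv.Perm (Fin m)) (j : Fin m) :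
    B σ ⟨2 * (j : ℕ) + 1, by have := j.isLt; omega⟩
      = ⟨2 * ((σ j : Fin m) : ℕ) + 1, by have := (σ j).isLt; omega⟩ := by
  rw [← e_eq1, ← e_eq1, B_apply]

@[simp] lemma sign_B (σ : Equiv.Perm (Fin m)) : Equiv.Perm.sign (B σ) = 1 := by
  rw [B, Equiv.Perm.sign_permCongr, Equiv.Perm.sign_prodCongrLeft]
  simp [Finset.prod_const, ← pow_mul]

lemma B_injective : Function.Injective (B (m := m)) := by
  intro σ τ h
  ext j
  have h2 : B σ ⟨2 * (j : ℕ), by have := j.isLt; omega⟩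
      = B τ ⟨2 * (j : ℕ), by have := j.isLt; omega⟩ := by rw [h]
  rw [B_apply0, B_apply0, Fin.mk.injEq] at h2
  omega

lemma mem_iff (u v : Equiv.Perm (Fin (2 * m))) :
    v ∈ pairedSet u ↔ ∃ σ : Equiv.Perm (Fin m), v = u * B σ := by
  constructor
  · rintro ⟨σ, hσ⟩
    refine ⟨σ, ?_⟩
    ext x
    obtain ⟨⟨j, r⟩, rfl⟩ := (e m).surjective x
    simp only [Equiv.Perm.mul_apply]
    rw [B_apply]
    obtain ⟨r, hr⟩ := r
    interval_cases r
    · simp only [Fin.mk_zero]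
      rw [e_eq0, e_eq0]
      exact congrArg Fin.val (hσ j).1
    · simp only [Fin.mk_one]
      rw [e_eq1, e_eq1]
      exact congrArg Fin.val (hσ j).2
  · rintro ⟨σ, rfl⟩
    refine ⟨σ, fun j => ?_⟩
    constructor
    · simp only [Equiv.Perm.mul_apply]; rw [B_apply0]
    · simp only [Equiv.Perm.mul_apply]; rw [B_apply1]

end PairedAux

/-- For even n = 2m, the paired permutation vertex set of a vertex u of BS_n has
cardinality (n/2)! = m!, and all its members have the same inversion parity as u. -/
theorem pairedSet_card_parity (m : ℕ) (u : Equiv.Perm (Fin (2 * m))) :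
    (pairedSet u).ncard = Nat.factorial m ∧
    ∀ v ∈ pairedSet u, Equiv.Perm.sign v = Equiv.Perm.sign u := by
  have hset : pairedSet u = Set.range (fun σ : Equiv.Perm (Fin m) => u * PairedAux.B σ) := by
    ext v; rw [PairedAux.mem_iff]; simp [eq_comm]
  constructor
  · rw [hset, ← Nat.card_coe_set_eq, Nat.card_range_of_injective
      (fun σ τ h => PairedAux.B_injective (mul_left_cancel h))]
    simp [Nat.card_eq_fintype_card, Fintype.card_perm, Fintype.card_fin]
  · intro v hv
    rw [hset] at hv
    obtain ⟨σ, rfl⟩ := hv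
    simp
end
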